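/- Let R be a finite commutative Frobenius ring and let χ : (R, +) → ℂ^× be a generating character of R. Let S = (s_{ij}) be the (t+1)×(t+1) complex matrix with s_{ij} = Σ_{r ∈ R, rR = a_jR} χ(r a_i). Let A be the 0–1 matrix with A_{ij} = 1 iff a_iR ⊆ a_jR, let D = diag(|a_0R|, …, |a_tR|), and let Q be the 0–1 matrix with Q_{ij} = 1 iff a_jR ⊆ (a_iR)⊥ = {r ∈ R : a_i r = 0}. Then S = Q D A^{−1} (with A^{−1} the inverse of A over ℚ, viewed in ℂ). -/

import Mathlib

/-! `A` is the zeta matrix of the poset of principal ideals, which is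
unitriangular for any linear extension of inclusion, so `det A = 1` and it suffices to show
`S A = Q D`. Grouping the elements of `R` by the principal ideal they generate, entry `(i, j)`
of `S A` becomes the sum of `χ (r a_i)` over `r ∈ a_j R`. This is a character sum over the group
`a_j R`: it equals `|a_j R|` if the character is trivial and `0` otherwise, and since `χ` is
generating, the character is trivial exactly when the ideal `a_i a_j R` vanishes. -/

noncomputable section
open scoped BigOperators

/-- The dual of a linear code `C ⊆ Rⁿ` with respect to the standard inner
product `u·v = ∑ ℓ, u ℓ * v ℓ`. -/
def dualCode {R : Type*} [CommRing R] {n : ℕ} (C : Submodule R (Fin n → R)) :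
    Submodule R (Fin n → R) where
  carrier := {v | ∀ u ∈ C, ∑ ℓ, u ℓ * v ℓ = 0}
  add_mem' := by
    intro v w hv hw u hu
    simp only [Set.mem_setOf_eq] at *
    have h1 := hv u hu
    have h2 := hw u hu
    simp only [Pi.add_apply, mul_add, Finset.sum_add_distrib, h1, h2, add_zero]
  zero_mem' := by
    intro u hu
    simp
  smul_mem' := by
    intro c v hv u hu
    simp only [Set.mem_setOf_eq] at *
    have h := hv u hu
    have : ∑ ℓ, u ℓ * (c • v) ℓ = c * ∑ ℓ, u ℓ * v ℓ := by
      rw [Finset.mul_sum]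
      exact Finset.sum_congr rfl fun ℓ _ => by
        simp only [Pi.smul_apply, smul_eq_mul]; ring
    rw [this, h, mul_zero]

/-- A finite commutative ring is Frobenius iff `|C|·|C⊥| = |R|ⁿ` for every
linear code `C` of every length `n` over `R`. -/
def IsFrobeniusRing (R : Type*) [CommRing R] [Fintype R] : Prop :=
  ∀ (n : ℕ) (C : Submodule R (Fin n → R)),
    Nat.card C * Nat.card (dualCode C) = Fintype.card R ^ n

open Classical

def AddChar.IsGenerating {R M : Type*} [CommRing R] [Monoid M] (χ : AddChar R M) : Prop :=
  ∀ I : Ideal R, (∀ x ∈ I, χ x = 1) → I = ⊥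

theorem Matrix.det_eq_one_of_apply_eq_ite_le {ι α K : Type*} [Fintype ι] [DecidableEq ι]
    [PartialOrder α] [CommRing K] {f : ι → α} (hf : Function.Injective f) {A : Matrix ι ι K}
    (hA : ∀ i j, A i j = if f i ≤ f j then 1 else 0) : A.det = 1 := by
  let : LinearOrder ι := LinearOrder.lift' (toLinearExtension ∘ f) fun _ _ h => hf h
  have hup : A.IsUpperTriangular := fun i j hji => by
    rw [hA, if_neg]
    exact fun hij => (toLinearExtension.monotone hij).not_gt hji
  convert (Matrix.det_of_isUpperTriangular hup).trans (Finset.prod_eq_one fun i _ => ?_)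
  simp [hA]

theorem AddChar.sum_ite_mem_eq {G K : Type*} [AddCommGroup G] [Fintype G] [CommRing K]
    [IsDomain K] (ψ : AddChar G K) (H : AddSubgroup G) :
    ∑ x, (if x ∈ H then ψ x else 0) = if ∀ x ∈ H, ψ x = 1 then (Nat.card H : K) else 0 := by
  rw [← Finset.sum_filter, Finset.sum_subtype (p := (· ∈ H)) _ (by simp)]
  refine (ψ.compAddMonoidHom H.subtype).sum_eq_ite.trans ?_
  rw [Nat.card_eq_fintype_card]
  congr 1
  simp [AddChar.ext_iff]

theorem AddChar.IsGenerating.forall_mem_ideal_mul_eq_one_iff {R M : Type*} [CommRing R]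
    [Monoid M] {χ : AddChar R M} (hχ : χ.IsGenerating) (b : R) (J : Ideal R) :
    (∀ r ∈ J, χ (b * r) = 1) ↔ ∀ r ∈ J, b * r = 0 := by
  refine ⟨fun h r hr => ?_, fun h r hr => by rw [h r hr, AddChar.map_zero_eq_one]⟩
  have hbJ : Submodule.map (LinearMap.mulLeft R b) J = ⊥ := by
    refine hχ _ ?_
    rintro _ ⟨s, hs, rfl⟩
    exact h s hs
  simpa [hbJ] using Submodule.mem_map_of_mem (f := LinearMap.mulLeft R b) hr

theorem AddChar.IsGenerating.sum_ite_mem_ideal_eq {R K : Type*} [CommRing R] [Fintype R]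
    [CommRing K] [IsDomain K] {χ : AddChar R K} (hχ : χ.IsGenerating) (b : R) (J : Ideal R) :
    ∑ r, (if r ∈ J then χ (r * b) else 0) =
      if ∀ r ∈ J, b * r = 0 then (Nat.card J : K) else 0 := by
  simp_rw [← hχ.forall_mem_ideal_mul_eq_one_iff, mul_comm _ b]
  exact (χ.mulShift b).sum_ite_mem_eq J.toAddSubgroup

theorem sum_ite_sum_ite_span_eq {R ι M : Type*} [CommRing R] [Fintype R] [Fintype ι]
    [AddCommMonoid M] {a : ι → R} (hrep : ∀ r : R, ∃ i, Ideal.span {r} = Ideal.span {a i})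
    (hinj : ∀ i j, Ideal.span {a i} = Ideal.span {a j} → i = j) (P : Ideal R → Prop)
    (f : R → M) :
    ∑ k, (if P (Ideal.span {a k}) then
        ∑ r, (if Ideal.span {r} = Ideal.span {a k} then f r else 0) else 0) =
      ∑ r, if P (Ideal.span {r}) then f r else 0 := by
  simp_rw [Finset.ite_sum_zero]
  rw [Finset.sum_comm]
  refine Finset.sum_congr rfl fun r _ => ?_
  obtain ⟨k₀, hk₀⟩ := hrep r
  have hk : ∀ k, Ideal.span {r} = Ideal.span {a k} ↔ k = k₀ := fun k =>
    ⟨fun h => hinj k k₀ (h.symm.trans hk₀), fun h => h ▸ hk₀⟩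
  simp only [hk]
  rw [hk₀, Fintype.sum_eq_single k₀ fun k hk => by simp [hk], if_pos rfl]

theorem stmt9 {R : Type*} [CommRing R] [Fintype R]
    {t : ℕ} (a : Fin (t + 1) → R)
    (hrep : ∀ r : R, ∃ i, Ideal.span {r} = Ideal.span {a i})
    (hinj : ∀ i j, Ideal.span {a i} = Ideal.span {a j} → i = j)
    (χ : AddChar R ℂ)
    (hχ : ∀ I : Ideal R, (∀ x ∈ I, χ x = 1) → I = ⊥)
    (S A D Q : Matrix (Fin (t + 1)) (Fin (t + 1)) ℂ)
    (hS : ∀ i j, S i j = ∑ r : R,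
      if Ideal.span {r} = Ideal.span {a j} then χ (r * a i) else 0)
    (hA : ∀ i j, A i j = if Ideal.span {a i} ≤ Ideal.span {a j} then 1 else 0)
    (hD : D = Matrix.diagonal fun i => (Nat.card (Ideal.span {a i}) : ℂ))
    (hQ : ∀ i j, Q i j =
      if ∀ r ∈ Ideal.span {a j}, a i * r = 0 then 1 else 0) :
    S = Q * D * A⁻¹ := by
  have hAdet : A.det = 1 :=
    Matrix.det_eq_one_of_apply_eq_ite_le (f := fun i => Ideal.span {a i}) (fun i j => hinj i j) hA
  have hSA : S * A = Q * D := by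
    ext i j
    rw [Matrix.mul_apply, hD, Matrix.mul_diagonal]
    simp only [hA, mul_ite, mul_one, mul_zero, hS]
    rw [sum_ite_sum_ite_span_eq hrep hinj (· ≤ Ideal.span {a j})]
    simp_rw [Ideal.span_singleton_le_iff_mem]
    rw [AddChar.IsGenerating.sum_ite_mem_ideal_eq hχ, hQ, ite_mul, one_mul, zero_mul]
  rw [← Matrix.mul_nonsing_inv_cancel_right A S (by simp [hAdet]), hSA]

end
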